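/- arXiv:2312.02097 — 3 statements merged into one kernel-verified Lean document; each statement's English description precedes it below -/
import Mathlib

section
/- Let G = (V,E) be a graph on n vertices and define φ : V → ℝ^n by (φ(u))_v = 2 if u = v, (φ(u))_v = 0 if (u,v) ∈ E, and (φ(u))_v = 1 otherwise. Then for all u,v ∈ V: if (u,v) ∈ E then ‖φ(u) − φ(v)‖_∞ ≥ 2, and if u ≠ v with (u,v) ∉ E then ‖φ(u) − φ(v)‖_∞ ≤ 1. -/
namespace SimpleGraph

variable {V : Type*} (G : SimpleGraph V) [DecidableEq V] [DecidableRel G.Adj]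

def supNormEmbedding (u : V) : V → ℝ :=
  fun v => if u = v then 2 else if G.Adj u v then 0 else 1

variable {G}

lemma supNormEmbedding_self (u : V) : G.supNormEmbedding u u = 2 := if_pos rfl

lemma supNormEmbedding_of_adj {u v : V} (h : G.Adj u v) : G.supNormEmbedding u v = 0 := by
  simp [supNormEmbedding, h.ne, h]

lemma supNormEmbedding_of_ne_of_not_adj {u v : V} (hne : u ≠ v) (h : ¬G.Adj u v) :
    G.supNormEmbedding u v = 1 := by
  simp [supNormEmbedding, hne, h]

lemma supNormEmbedding_mem_Icc_of_ne {u v : V} (hne : u ≠ v) :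
    G.supNormEmbedding u v ∈ Set.Icc (0 : ℝ) 1 := by
  by_cases h : G.Adj u v
  · simp [supNormEmbedding_of_adj h]
  · simp [supNormEmbedding_of_ne_of_not_adj hne h]

variable [Fintype V]

theorem two_le_norm_supNormEmbedding_sub_of_adj {u v : V} (h : G.Adj u v) :
    2 ≤ ‖G.supNormEmbedding u - G.supNormEmbedding v‖ :=
  calc (2 : ℝ) = ‖(G.supNormEmbedding u - G.supNormEmbedding v) v‖ := by
        simp [supNormEmbedding_of_adj h, supNormEmbedding_self]
    _ ≤ _ := norm_le_pi_norm _ v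

theorem norm_supNormEmbedding_sub_le_one {u v : V} (hne : u ≠ v) (h : ¬G.Adj u v) :
    ‖G.supNormEmbedding u - G.supNormEmbedding v‖ ≤ 1 := by
  refine (pi_norm_le_iff_of_nonneg zero_le_one).2 fun i => ?_
  rw [Pi.sub_apply, Real.norm_eq_abs, abs_le]
  rcases eq_or_ne u i with rfl | hui
  · norm_num [supNormEmbedding_self,
      supNormEmbedding_of_ne_of_not_adj hne.symm (mt G.adj_symm h)]
  rcases eq_or_ne v i with rfl | hvi
  · norm_num [supNormEmbedding_self, supNormEmbedding_of_ne_of_not_adj hne h]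
  obtain ⟨hu₀, hu₁⟩ := supNormEmbedding_mem_Icc_of_ne (G := G) hui
  obtain ⟨hv₀, hv₁⟩ := supNormEmbedding_mem_Icc_of_ne (G := G) hvi
  constructor <;> linarith

end SimpleGraph

theorem stmt1 (n : ℕ) (G : SimpleGraph (Fin n)) [DecidableRel G.Adj]
    (φ : Fin n → (Fin n → ℝ))
    (hφ : ∀ u v, φ u v = if u = v then 2 else if G.Adj u v then 0 else 1) :
    ∀ u v, (G.Adj u v → 2 ≤ ‖φ u - φ v‖) ∧
      (u ≠ v → ¬G.Adj u v → ‖φ u - φ v‖ ≤ 1) := by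
  obtain rfl : φ = G.supNormEmbedding := funext₂ hφ
  exact fun u v => ⟨G.two_le_norm_supNormEmbedding_sub_of_adj,
    G.norm_supNormEmbedding_sub_le_one⟩
end

section
/- Define S = {x ∈ ℝ³ : ‖x‖² = 1/2}, and for a point x ∈ S write conditions on signs of coordinates. Let A = {x ∈ S : x₁ ≤ x₂ and x₁ ≤ x₃, and (x₁ ≥ 0, x₂ ≤ 0, x₃ ≤ 0) or (x₁ ≤ 0, x₂ ≥ 0, x₃ ≤ 0) or (x₁ ≤ 0, x₂ ≤ 0, x₃ ≥ 0)}. Then for any two points x, y ∈ A, ‖x − y‖_2 ≤ √(1 + √2/2). -/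
/-!
Since both points have squared norm `1/2`, `dist x y ^ 2 = 1 - 2 ⟪x, y⟫`, so it suffices to show
`⟪x, y⟫ ≥ -√2/4`. The sign pattern with nonnegative first coordinate forces `x = 0` once `x 0` is
the minimum, so every point lies in one of the octants `(-, +, -)` or `(-, -, +)`. For two points
of the same octant every coordinate product is nonnegative. For `x = (a, b, c)` with `a ≤ c ≤ 0 ≤ b`
and `y = (p, q, r)` with `p ≤ q ≤ 0 ≤ r` the product `a p` is nonnegative, and since `c² ≤ a²`,
`q² ≤ p²`, a weighted Cauchy–Schwarz inequality gives
`(b q + c r)² ≤ (b² + 2c²)(q² + r²/2) ≤ (1/2)(1/4)`.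
-/

open Real

lemma sq_mul_add_mul_le (b c q r : ℝ) :
    (b * q + c * r) ^ 2 ≤ (b ^ 2 + 2 * c ^ 2) * (q ^ 2 + r ^ 2 / 2) := by
  nlinarith [sq_nonneg (b * r - 2 * c * q)]

lemma sq_add_two_mul_sq_le_of_le_of_nonpos {a c : ℝ} (b : ℝ) (hac : a ≤ c) (hc : c ≤ 0) :
    b ^ 2 + 2 * c ^ 2 ≤ a ^ 2 + b ^ 2 + c ^ 2 := by
  nlinarith

lemma neg_le_mul_add_mul_add_mul_of_mixed_octants {ρ a b c p q r : ℝ}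
    (hac : a ≤ c) (hc : c ≤ 0) (hpq : p ≤ q) (hq : q ≤ 0)
    (hx : a ^ 2 + b ^ 2 + c ^ 2 ≤ ρ) (hy : p ^ 2 + q ^ 2 + r ^ 2 ≤ ρ) :
    -(√2 / 2 * ρ) ≤ a * p + b * q + c * r := by
  have hap : 0 ≤ a * p := mul_nonneg_of_nonpos_of_nonpos (hac.trans hc) (hpq.trans hq)
  have hbc : b ^ 2 + 2 * c ^ 2 ≤ ρ := (sq_add_two_mul_sq_le_of_le_of_nonpos b hac hc).trans hx
  have hqr : q ^ 2 + r ^ 2 / 2 ≤ ρ / 2 := by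
    linarith [sq_add_two_mul_sq_le_of_le_of_nonpos r hpq hq]
  have hρ : 0 ≤ ρ := le_trans (by positivity) hx
  have hsq : (b * q + c * r) ^ 2 ≤ (√2 / 2 * ρ) ^ 2 :=
    calc (b * q + c * r) ^ 2 ≤ (b ^ 2 + 2 * c ^ 2) * (q ^ 2 + r ^ 2 / 2) := sq_mul_add_mul_le b c q r
      _ ≤ ρ * (ρ / 2) := mul_le_mul hbc hqr (by positivity) hρ
      _ = (√2 / 2 * ρ) ^ 2 := by
        rw [mul_pow, div_pow, sq_sqrt zero_le_two]
        ring
  linarith [(abs_le_of_sq_le_sq' hsq (by positivity)).1]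

lemma octant_cases_of_le_of_le {a b c : ℝ} (hab : a ≤ b) (hac : a ≤ c)
    (h : (0 ≤ a ∧ b ≤ 0 ∧ c ≤ 0) ∨ (a ≤ 0 ∧ 0 ≤ b ∧ c ≤ 0) ∨ (a ≤ 0 ∧ b ≤ 0 ∧ 0 ≤ c)) :
    (a ≤ 0 ∧ 0 ≤ b ∧ c ≤ 0) ∨ (a ≤ 0 ∧ b ≤ 0 ∧ 0 ≤ c) := by
  rcases h with ⟨ha, hb, hc⟩ | h | h
  · exact Or.inr ⟨by linarith, hb, by linarith⟩
  · exact Or.inl h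
  · exact Or.inr h

lemma neg_le_mul_add_mul_add_mul_of_octants {ρ a b c p q r : ℝ}
    (hab : a ≤ b) (hac : a ≤ c) (hpq : p ≤ q) (hpr : p ≤ r)
    (hx : (a ≤ 0 ∧ 0 ≤ b ∧ c ≤ 0) ∨ (a ≤ 0 ∧ b ≤ 0 ∧ 0 ≤ c))
    (hy : (p ≤ 0 ∧ 0 ≤ q ∧ r ≤ 0) ∨ (p ≤ 0 ∧ q ≤ 0 ∧ 0 ≤ r))
    (hxρ : a ^ 2 + b ^ 2 + c ^ 2 ≤ ρ) (hyρ : p ^ 2 + q ^ 2 + r ^ 2 ≤ ρ) :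
    -(√2 / 2 * ρ) ≤ a * p + b * q + c * r := by
  have hρ : 0 ≤ √2 / 2 * ρ := mul_nonneg (by positivity) (le_trans (by positivity) hxρ)
  rcases hx with ⟨ha, hb, hc⟩ | ⟨ha, hb, hc⟩ <;> rcases hy with ⟨hp, hq, hr⟩ | ⟨hp, hq, hr⟩
  · nlinarith [mul_nonneg_of_nonpos_of_nonpos ha hp, mul_nonneg hb hq,
      mul_nonneg_of_nonpos_of_nonpos hc hr]
  · exact neg_le_mul_add_mul_add_mul_of_mixed_octants hac hc hpq hq hxρ hyρ
  · linarith [neg_le_mul_add_mul_add_mul_of_mixed_octants hpr hr hab hb hyρ hxρ]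
  · nlinarith [mul_nonneg_of_nonpos_of_nonpos ha hp, mul_nonneg_of_nonpos_of_nonpos hb hq,
      mul_nonneg hc hr]

lemma EuclideanSpace.norm_sq_fin_three (x : EuclideanSpace ℝ (Fin 3)) :
    ‖x‖ ^ 2 = x 0 ^ 2 + x 1 ^ 2 + x 2 ^ 2 := by
  simp [EuclideanSpace.norm_sq_eq, Fin.sum_univ_three]

lemma EuclideanSpace.inner_fin_three (x y : EuclideanSpace ℝ (Fin 3)) :
    inner ℝ x y = x 0 * y 0 + x 1 * y 1 + x 2 * y 2 := by
  simp [PiLp.inner_apply, Fin.sum_univ_three, mul_comm]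

theorem stmt8 (A : Set (EuclideanSpace ℝ (Fin 3)))
    (hA : A = {x | ‖x‖ ^ 2 = 1 / 2 ∧ x 0 ≤ x 1 ∧ x 0 ≤ x 2 ∧
      ((0 ≤ x 0 ∧ x 1 ≤ 0 ∧ x 2 ≤ 0) ∨ (x 0 ≤ 0 ∧ 0 ≤ x 1 ∧ x 2 ≤ 0) ∨
       (x 0 ≤ 0 ∧ x 1 ≤ 0 ∧ 0 ≤ x 2))}) :
    ∀ x ∈ A, ∀ y ∈ A, dist x y ≤ Real.sqrt (1 + Real.sqrt 2 / 2) := by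
  intro x hx y hy
  rw [hA] at hx hy
  obtain ⟨hxn, hx01, hx02, hxc⟩ := hx
  obtain ⟨hyn, hy01, hy02, hyc⟩ := hy
  have hinner : -(√2 / 2 * (1 / 2)) ≤ inner ℝ x y := by
    rw [EuclideanSpace.inner_fin_three]
    rw [EuclideanSpace.norm_sq_fin_three] at hxn hyn
    exact neg_le_mul_add_mul_add_mul_of_octants hx01 hx02 hy01 hy02
      (octant_cases_of_le_of_le hx01 hx02 hxc) (octant_cases_of_le_of_le hy01 hy02 hyc)
      hxn.le hyn.le
  rw [Real.le_sqrt dist_nonneg (by positivity), dist_eq_norm, norm_sub_sq_real, hxn, hyn]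
  linarith
end

section
/- Any finite set of points in ℝ^n of diameter Δ is contained in a closed ball of radius at most Δ/√2. -/
/-!
Take a smallest ball `closedBall c r` containing `P`; it exists because the enclosing radius is
a continuous, coercive function of the centre. If `Δ² < 2r²`, any two points `x, y` of `P` on the
boundary sphere satisfy `2⟪x - c, y - c⟫ = 2r² - ‖x - y‖² > 0`, so the sum `v` of the vectors
`y - c` over the boundary points has positive inner product with each of them. Moving the centre a
little along `v` then brings every boundary point strictly inside, while interior points stay
inside, contradicting minimality. Hence `2r² ≤ Δ²`.
-/

open Filter Topology RealInnerProductSpace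

theorem Finset.exists_smallest_enclosing_ball {α : Type*} [PseudoMetricSpace α] [ProperSpace α]
    {P : Finset α} (hP : P.Nonempty) :
    ∃ c r, (∀ x ∈ P, dist x c ≤ r) ∧ ∀ c', ∃ x ∈ P, r ≤ dist x c' := by
  obtain ⟨p, hp⟩ := hP
  let f : α → ℝ := fun c => P.sup' ⟨p, hp⟩ (dist · c)
  have hf : Continuous f :=
    Continuous.finset_sup'_apply _ fun x _ => continuous_const.dist continuous_id
  have hf_coercive : Tendsto f (cocompact α) atTop :=
    tendsto_atTop_mono (fun c => le_sup' (dist · c) hp) (tendsto_dist_left_cocompact_atTop p)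
  have : Nonempty α := ⟨p⟩
  obtain ⟨c, hc⟩ := hf.exists_forall_le hf_coercive
  refine ⟨c, f c, fun x hx => le_sup' (dist · c) hx, fun c' => ?_⟩
  obtain ⟨x, hx, hfx⟩ := exists_mem_eq_sup' ⟨p, hp⟩ (dist · c')
  exact ⟨x, hx, hfx ▸ hc c'⟩

section InnerProductSpace

variable {E : Type*} [NormedAddCommGroup E] [InnerProductSpace ℝ E]

theorem eventually_dist_add_smul_lt {x c v : E} (h : 0 < ⟪x - c, v⟫) :
    ∀ᶠ t in 𝓝[>] (0 : ℝ), dist x (c + t • v) < dist x c := by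
  have hlim : Tendsto (fun t : ℝ => t * ‖v‖ ^ 2) (𝓝[>] 0) (𝓝 0) :=
    tendsto_nhdsWithin_of_tendsto_nhds <|
      (continuous_id.mul continuous_const).tendsto' _ _ (zero_mul _)
  have h2 : 0 < 2 * ⟪x - c, v⟫ := by positivity
  filter_upwards [self_mem_nhdsWithin, hlim.eventually (gt_mem_nhds h2)] with t (ht : 0 < t) hsmall
  have hexpand :
      ‖x - (c + t • v)‖ ^ 2 = ‖x - c‖ ^ 2 - 2 * t * ⟪x - c, v⟫ + t ^ 2 * ‖v‖ ^ 2 := by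
    rw [show x - (c + t • v) = (x - c) - t • v by abel, norm_sub_sq_real, real_inner_smul_right,
      norm_smul, Real.norm_of_nonneg ht.le]
    ring
  rw [dist_eq_norm, dist_eq_norm,
    ← pow_lt_pow_iff_left₀ (norm_nonneg _) (norm_nonneg _) two_ne_zero, hexpand]
  nlinarith

theorem eventually_forall_dist_add_smul_lt {P : Finset E} {c v : E} {r : ℝ}
    (hle : ∀ x ∈ P, dist x c ≤ r) (hpos : ∀ x ∈ P, dist x c = r → 0 < ⟪x - c, v⟫) :
    ∀ᶠ t in 𝓝[>] (0 : ℝ), ∀ x ∈ P, dist x (c + t • v) < r := by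
  refine (eventually_all_finset P).2 fun x hx => ?_
  rcases (hle x hx).lt_or_eq with hlt | heq
  · have hcont : Continuous fun t : ℝ => dist x (c + t • v) := by fun_prop
    exact nhdsWithin_le_nhds <| hcont.tendsto 0 |>.eventually <| gt_mem_nhds <| by simpa using hlt
  · exact heq ▸ eventually_dist_add_smul_lt (hpos x hx heq)

theorem exists_forall_dist_lt_of_dist_sq_lt {P : Finset E} {c : E} {r : ℝ}
    (hle : ∀ x ∈ P, dist x c ≤ r) (hP : ∀ x ∈ P, ∀ y ∈ P, dist x y ^ 2 < 2 * r ^ 2) :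
    ∃ c', ∀ x ∈ P, dist x c' < r := by
  classical
  set A := P.filter fun y => dist y c = r
  have hinner : ∀ x ∈ A, ∀ y ∈ A, 0 < ⟪x - c, y - c⟫ := by
    intro x hx y hy
    rw [Finset.mem_filter, dist_eq_norm] at hx hy
    have hxy := hP x hx.1 y hy.1
    rw [dist_eq_norm, ← sub_sub_sub_cancel_right x y c, norm_sub_sq_real, hx.2, hy.2] at hxy
    linarith
  have hpos : ∀ x ∈ P, dist x c = r → 0 < ⟪x - c, ∑ y ∈ A, (y - c)⟫ := by
    intro x hx hxr
    have hxA : x ∈ A := Finset.mem_filter.2 ⟨hx, hxr⟩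
    rw [inner_sum]
    exact Finset.sum_pos (hinner x hxA) ⟨x, hxA⟩
  obtain ⟨t, ht⟩ := (eventually_forall_dist_add_smul_lt hle hpos).exists
  exact ⟨_, ht⟩

end InnerProductSpace

theorem stmt19 (n : ℕ) (P : Finset (EuclideanSpace ℝ (Fin n))) (Δ : ℝ)
    (hΔ : ∀ x ∈ P, ∀ y ∈ P, dist x y ≤ Δ) :
    ∃ c : EuclideanSpace ℝ (Fin n), ∀ x ∈ P, dist x c ≤ Δ / Real.sqrt 2 := by
  rcases P.eq_empty_or_nonempty with rfl | ⟨p, hp⟩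
  · exact ⟨0, by simp⟩
  obtain ⟨c, r, hc, hmin⟩ := Finset.exists_smallest_enclosing_ball ⟨p, hp⟩
  have hΔ0 : 0 ≤ Δ := dist_nonneg.trans (hΔ p hp p hp)
  have hr0 : 0 ≤ r := dist_nonneg.trans (hc p hp)
  have hr : 2 * r ^ 2 ≤ Δ ^ 2 := by
    by_contra! hlt
    obtain ⟨c', hc'⟩ := exists_forall_dist_lt_of_dist_sq_lt hc fun x hx y hy =>
      (pow_le_pow_left₀ dist_nonneg (hΔ x hx y hy) 2).trans_lt hlt
    obtain ⟨x, hx, hrx⟩ := hmin c'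
    exact (hc' x hx).not_ge hrx
  refine ⟨c, fun x hx => (hc x hx).trans ?_⟩
  rw [le_div_iff₀ (by positivity)]
  nlinarith [Real.sq_sqrt (zero_le_two : (0 : ℝ) ≤ 2), Real.sqrt_nonneg 2]
end
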